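/- Let α,β,μ be reals with α,β≠0 and Δ = α²+β²−2μ² > 0. Then ∂_α M[B_μ] = −16μ²βα/(Δ² + 8μ²β²), which is negative for α,β,μ>0. -/

import Mathlib

open Real

/-- Mass of the Gardner breather as a function of the parameters `α, β, μ`. -/
noncomputable def breatherMass (α β μ : ℝ) : ℝ :=
  4 * β + 2 * Real.sqrt 2 * μ *
    Real.arctan (2 * Real.sqrt 2 * μ * β / (α ^ 2 + β ^ 2 - 2 * μ ^ 2))

/-! The mass depends on `α` only through `Δ`, and `d/dΔ arctan (c / Δ) = -c / (Δ² + c²)`;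
the chain rule with `∂Δ/∂α = 2α` and `c² = (2√2 μβ)² = 8μ²β²` gives the formula. -/

theorem hasDerivAt_arctan_const_div {f : ℝ → ℝ} {f' x : ℝ} (c : ℝ) (hf : HasDerivAt f f' x)
    (hx : f x ≠ 0) :
    HasDerivAt (fun y => Real.arctan (c / f y)) (-c * f' / (f x ^ 2 + c ^ 2)) x := by
  refine ((hasDerivAt_const x c).div hf hx).arctan.congr_deriv ?_
  simp only [Pi.div_apply]
  field_simp
  ring

theorem hasDerivAt_breatherMass_alpha (α β μ : ℝ) (hΔ : α ^ 2 + β ^ 2 - 2 * μ ^ 2 ≠ 0) :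
    HasDerivAt (fun a => breatherMass a β μ)
      (-16 * μ ^ 2 * β * α / ((α ^ 2 + β ^ 2 - 2 * μ ^ 2) ^ 2 + 8 * μ ^ 2 * β ^ 2)) α := by
  have hΔ' : HasDerivAt (fun a : ℝ => a ^ 2 + β ^ 2 - 2 * μ ^ 2) (2 * α) α := by
    simpa using ((hasDerivAt_pow 2 α).add_const (β ^ 2)).sub_const (2 * μ ^ 2)
  have hsqrt : √2 ^ 2 = 2 := sq_sqrt zero_le_two
  refine (((hasDerivAt_arctan_const_div (2 * √2 * μ * β) hΔ' hΔ).const_mul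
    (2 * √2 * μ)).const_add (4 * β)).congr_deriv ?_
  have hc : (2 * √2 * μ * β) ^ 2 = 8 * μ ^ 2 * β ^ 2 := by
    linear_combination 4 * μ ^ 2 * β ^ 2 * hsqrt
  rw [hc]
  linear_combination
    -8 * μ ^ 2 * β * α / ((α ^ 2 + β ^ 2 - 2 * μ ^ 2) ^ 2 + 8 * μ ^ 2 * β ^ 2) * hsqrt

theorem gardner_breather_mass_deriv_alpha_general (α β μ : ℝ)
    (hΔ : 0 < α ^ 2 + β ^ 2 - 2 * μ ^ 2) :
    HasDerivAt (fun a => breatherMass a β μ)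
      (-16 * μ ^ 2 * β * α /
        ((α ^ 2 + β ^ 2 - 2 * μ ^ 2) ^ 2 + 8 * μ ^ 2 * β ^ 2)) α ∧
    (0 < α → 0 < β → 0 < μ →
      -16 * μ ^ 2 * β * α /
        ((α ^ 2 + β ^ 2 - 2 * μ ^ 2) ^ 2 + 8 * μ ^ 2 * β ^ 2) < 0) := by
  refine ⟨hasDerivAt_breatherMass_alpha α β μ hΔ.ne', fun hα hβ hμ => ?_⟩
  apply div_neg_of_neg_of_pos
  · have : 0 < 16 * μ ^ 2 * β * α := by positivity
    linarith
  · positivity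

theorem gardner_breather_mass_deriv_alpha (α β μ : ℝ) (hα : α ≠ 0) (hβ : β ≠ 0)
    (hΔ : 0 < α ^ 2 + β ^ 2 - 2 * μ ^ 2) :
    HasDerivAt (fun a => breatherMass a β μ)
      (-16 * μ ^ 2 * β * α /
        ((α ^ 2 + β ^ 2 - 2 * μ ^ 2) ^ 2 + 8 * μ ^ 2 * β ^ 2)) α ∧
    (0 < α → 0 < β → 0 < μ →
      -16 * μ ^ 2 * β * α /
        ((α ^ 2 + β ^ 2 - 2 * μ ^ 2) ^ 2 + 8 * μ ^ 2 * β ^ 2) < 0) :=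
  gardner_breather_mass_deriv_alpha_general α β μ hΔ
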